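/- Let S be a finite set with |S| = k ≥ 3 and c ≥ 0 a real number. Then Φ(B_c) = P_c, Ψ(P_c) ⊆ B_c, Φ(B̄_c) = P̄_c, and Ψ(P̄_c) ⊆ B̄_c. -/
import Mathlib

open Finset

/-- The projection `Φ : ℝ^{S^±} → ℝ^S`, `(Φx)(i) = (x(i⁺) − x(i⁻))/2`,
where `S^± = S × Bool` with `true` = `+`. -/
noncomputable def Phi {S : Type*} (x : S × Bool → ℝ) : S → ℝ :=
  fun i => (x (i, true) - x (i, false)) / 2

/-- The lift `Ψ : ℝ^S → ℝ^{S^±}`, `(Ψz)(i⁺) = z(i)`, `(Ψz)(i⁻) = −z(i)`. -/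
noncomputable def Psi {S : Type*} (z : S → ℝ) : S × Bool → ℝ :=
  fun p => if p.2 then z p.1 else -z p.1

/-- The node-flowing polytope `P_c`. -/
def nodeFlowing (S : Type*) [Fintype S] [DecidableEq S] (c : ℝ) : Set (S → ℝ) :=
  {z | (∀ i, 0 ≤ z i) ∧ (∑ i, z i) ≤ 2 * c ∧
    ∀ t, z t ≤ ∑ i ∈ univ.erase t, z i}

/-- The tight node-flowing polytope `P̄_c`. -/
def tightNodeFlowing (S : Type*) [Fintype S] [DecidableEq S] (c : ℝ) : Set (S → ℝ) :=
  {z | (∀ i, 0 ≤ z i) ∧ (∑ i, z i) = 2 * c ∧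
    ∀ t, z t ≤ ∑ i ∈ univ.erase t, z i}

/-- The lift `B_c ⊆ ℝ^{S^±}` of the node-flowing polytope. -/
def liftedNodeFlowing (S : Type*) [Fintype S] [DecidableEq S] (c : ℝ) :
    Set (S × Bool → ℝ) :=
  {x | (∑ p : S × Bool, x p) = 0 ∧
    (∑ i : S, x (i, true)) ≤ 2 * c ∧
    (∀ i : S, x (i, true) + ∑ j ∈ univ.erase i, x (j, false) ≤ 0) ∧
    (∀ i : S, 0 ≤ x (i, true) ∧ x (i, true) ≤ c) ∧
    (∀ i : S, -c ≤ x (i, false) ∧ x (i, false) ≤ 0)}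

/-- The lift `B̄_c ⊆ ℝ^{S^±}` of the tight node-flowing polytope. -/
def liftedTightNodeFlowing (S : Type*) [Fintype S] [DecidableEq S] (c : ℝ) :
    Set (S × Bool → ℝ) :=
  {x | x ∈ liftedNodeFlowing S c ∧ (∑ i : S, x (i, false)) ≤ -(2 * c)}

lemma sum_prod_bool {S : Type*} [Fintype S] (x : S × Bool → ℝ) :
    ∑ p : S × Bool, x p = ∑ i, x (i, true) + ∑ i, x (i, false) := by
  rw [Fintype.sum_prod_type]
  simp [Fintype.sum_bool, Finset.sum_add_distrib]

lemma sum_phi {S : Type*} [Fintype S] (x : S × Bool → ℝ)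
    (h0 : (∑ p : S × Bool, x p) = 0) :
    ∑ i, Phi x i = ∑ i, x (i, true) := by
  rw [sum_prod_bool] at h0
  have : ∑ i, Phi x i = (∑ i, x (i, true) - ∑ i, x (i, false)) / 2 := by
    simp [Phi, sub_div, Finset.sum_sub_distrib, Finset.sum_div]
  rw [this]; linarith

lemma phi_mem {S : Type*} [Fintype S] [DecidableEq S] {c : ℝ}
    {x : S × Bool → ℝ} (hx : x ∈ liftedNodeFlowing S c) :
    Phi x ∈ nodeFlowing S c := by
  obtain ⟨h0, h1, h2, h3, h4⟩ := hx
  have hs := sum_phi x h0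
  rw [sum_prod_bool] at h0
  refine ⟨fun i => ?_, by rw [hs]; exact h1, fun t => ?_⟩
  · have := (h3 i).1; have := (h4 i).2
    simp only [Phi]; linarith
  · have herase : ∑ i ∈ univ.erase t, Phi x i = ∑ i, Phi x i - Phi x t := by
      rw [Finset.sum_erase_eq_sub (mem_univ t)]
    have h2t := h2 t
    rw [Finset.sum_erase_eq_sub (mem_univ t)] at h2t
    rw [herase, hs]
    simp only [Phi]
    linarith

lemma psi_mem {S : Type*} [Fintype S] [DecidableEq S] {c : ℝ}
    {z : S → ℝ} (hz : z ∈ nodeFlowing S c) :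
    Psi z ∈ liftedNodeFlowing S c := by
  obtain ⟨h0, h1, h2⟩ := hz
  have hzc : ∀ i, z i ≤ c := by
    intro i
    have h2i := h2 i
    rw [Finset.sum_erase_eq_sub (mem_univ i)] at h2i
    linarith
  refine ⟨?_, ?_, fun i => ?_, fun i => ⟨h0 i, hzc i⟩, fun i => ?_⟩
  · rw [sum_prod_bool]; simp [Psi]
  · simpa [Psi] using h1
  · have e : ∑ j ∈ univ.erase i, Psi z (j, false) = -∑ j ∈ univ.erase i, z j := by
      simp [Psi]
    have e2 : Psi z (i, true) = z i := by simp [Psi]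
    rw [e2, e]
    linarith [h2 i]
  · have := h0 i; have := hzc i
    have e : Psi z (i, false) = -z i := by simp [Psi]
    rw [e]
    constructor <;> linarith

lemma phi_psi {S : Type*} (z : S → ℝ) : Phi (Psi z) = z := by
  funext i; simp [Phi, Psi]

/-- **`B_c` and `B̄_c` are lifts of the node-flowing polytopes:**
`Φ(B_c) = P_c`, `Ψ(P_c) ⊆ B_c`, `Φ(B̄_c) = P̄_c`, and `Ψ(P̄_c) ⊆ B̄_c`. -/
theorem nodeFlowing_lifts (S : Type*) [Fintype S] [DecidableEq S]
    (hk : 3 ≤ Fintype.card S) (c : ℝ) (hc : 0 ≤ c) :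
    Phi '' liftedNodeFlowing S c = nodeFlowing S c ∧
    (∀ z ∈ nodeFlowing S c, Psi z ∈ liftedNodeFlowing S c) ∧
    Phi '' liftedTightNodeFlowing S c = tightNodeFlowing S c ∧
    (∀ z ∈ tightNodeFlowing S c, Psi z ∈ liftedTightNodeFlowing S c) := by
  refine ⟨?_, fun z hz => psi_mem hz, ?_, ?_⟩
  · ext z
    constructor
    · rintro ⟨x, hx, rfl⟩; exact phi_mem hx
    · intro hz; exact ⟨Psi z, psi_mem hz, phi_psi z⟩
  · ext z
    constructor
    · rintro ⟨x, ⟨hx, hxt⟩, rfl⟩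
      obtain ⟨h0n, h1n, h2n⟩ := phi_mem hx
      refine ⟨h0n, ?_, h2n⟩
      have hs := sum_phi x hx.1
      have h0 := hx.1
      rw [sum_prod_bool] at h0
      rw [hs]
      linarith [hx.2.1]
    · intro ⟨h0, h1, h2⟩
      refine ⟨Psi z, ⟨psi_mem ⟨h0, le_of_eq h1, h2⟩, ?_⟩, phi_psi z⟩
      have : ∑ i, Psi z (i, false) = -∑ i, z i := by
        simp [Psi, Finset.sum_neg_distrib]
      rw [this, h1]
  · intro z ⟨h0, h1, h2⟩
    refine ⟨psi_mem ⟨h0, le_of_eq h1, h2⟩, ?_⟩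
    have : ∑ i, Psi z (i, false) = -∑ i, z i := by
      simp [Psi, Finset.sum_neg_distrib]
    rw [this, h1]
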